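/- arXiv:2304.02775 — 2 statements merged into one kernel-verified Lean document; each statement's English description precedes it below -/
import Mathlib

section
/- Let ν_s ∈ P(S) be singular with respect to Lebesgue measure (ν_s ⊥ λ) and satisfy I(ν_s) < ∞. Then q(x,·) = δ_x(·) for ν_s-almost every x is the only transition kernel with invariant measure ν_s that attains the infimum defining I(ν_s); consequently I(ν_s) = ∫_S R(δ_x(·) ‖ K(x,·)) ν_s(dx) = ∫_S log(1/r(x)) ν_s(dx). -/
open MeasureTheory ProbabilityTheory Filter Set Metric
open scoped ENNReal NNReal Topology

noncomputable section

namespace MHLDP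

variable {α : Type*}

open Classical in
/-- Relative entropy `R(μ‖ν) = ∫ log (dμ/dν) dμ` if `μ ≪ ν` (and the integral exists),
`+∞` otherwise. -/
def relEnt [MeasurableSpace α] (μ ν : Measure α) : ℝ≥0∞ :=
  if μ ≪ ν ∧ Integrable (fun x => Real.log ((μ.rnDeriv ν x).toReal)) μ
  then ENNReal.ofReal (∫ x, Real.log ((μ.rnDeriv ν x).toReal) ∂μ)
  else ⊤

variable {d : ℕ} {S : Set (EuclideanSpace ℝ (Fin d))}

/-- Lebesgue measure on (the subtype) `S ⊆ ℝ^d`. -/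
def leb (S : Set (EuclideanSpace ℝ (Fin d))) : Measure S :=
  Measure.comap Subtype.val volume

/-- The Hastings ratio `min{1, π(y)J(x|y)/(π(x)J(y|x))}`, set to `1` when
`π(x)J(y|x) = 0`.  Here `Jd x y` denotes the density `J(y|x)`. -/
def hastingsRatio (πd : S → ℝ) (Jd : S → S → ℝ) (x y : S) : ℝ :=
  if πd x * Jd x y = 0 then 1 else min 1 ((πd y * Jd y x) / (πd x * Jd x y))

/-- The Lebesgue density `a(x,y)` of the acceptance part of the MH kernel. -/
def accDens (πd : S → ℝ) (Jd : S → S → ℝ) (x y : S) : ℝ :=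
  hastingsRatio πd Jd x y * Jd x y

/-- The acceptance sub-probability kernel `a(x,dy)`. -/
def acc (πd : S → ℝ) (Jd : S → S → ℝ) (x : S) : Measure S :=
  (leb S).withDensity (fun y => ENNReal.ofReal (accDens πd Jd x y))

/-- The rejection probability `r(x) = 1 - a(x,S)`. -/
def rej (πd : S → ℝ) (Jd : S → S → ℝ) (x : S) : ℝ :=
  1 - (acc πd Jd x Set.univ).toReal

/-- The Metropolis–Hastings transition kernel `K(x,dy) = a(x,dy) + r(x) δ_x(dy)`. -/
def mhK (πd : S → ℝ) (Jd : S → S → ℝ) (x : S) : Measure S :=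
  acc πd Jd x + ENNReal.ofReal (rej πd Jd x) • Measure.dirac x

/-- `μ` is an invariant measure for the transition kernel `q`. -/
def Invariant [MeasurableSpace α] (μ : Measure α) (q : α → Measure α) : Prop :=
  ∀ A : Set α, MeasurableSet A → μ A = ∫⁻ x, q x A ∂μ

/-- The rate function `I(ν) = inf_q ∫ R(q(x,·) ‖ K(x,·)) ν(dx)`, infimum over Markov
transition kernels `q` with invariant measure `ν`. -/
def rateI [MeasurableSpace α] (K : α → Measure α) (ν : Measure α) : ℝ≥0∞ :=
  ⨅ (q : Kernel α α) (_ : IsMarkovKernel q) (_ : Invariant ν (fun x => q x)),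
    ∫⁻ x, relEnt (q x) (K x) ∂ν

/-- The joint measure `(μ ⊗ K)(dx dy) = μ(dx) K(x,dy)` on `S × S`. -/
def prodK [MeasurableSpace α] (μ : Measure α) (K : α → Measure α) : Measure (α × α) :=
  μ.bind fun x => (K x).map fun y => (x, y)

/-- The rate function `I(μ) = inf_{γ ∈ A(μ)} R(γ ‖ μ ⊗ K)`, infimum over probability
measures on `S × S` with both marginals equal to `μ`. -/
def rateEmp [MeasurableSpace α] (K : α → Measure α) (μ : Measure α) : ℝ≥0∞ :=
  ⨅ (γ : Measure (α × α)) (_ : IsProbabilityMeasure γ)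
    (_ : γ.map Prod.fst = μ) (_ : γ.map Prod.snd = μ), relEnt γ (prodK μ K)

/-- Assumptions (A.1) and (A.2): `π` is a probability measure on `S` with continuous
density `πd` w.r.t. Lebesgue measure, equivalent to Lebesgue measure; the proposal
distributions `J(·|x)` are probability measures with jointly continuous, bounded,
strictly positive density `Jd x · = J(·|x)`, absolutely continuous w.r.t. `π`. -/
structure Assumptions (πd : S → ℝ) (Jd : S → S → ℝ) (π : Measure S) : Prop where
  measS : MeasurableSet S
  prob_pi : IsProbabilityMeasure π
  pi_nonneg : ∀ x, 0 ≤ πd x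
  pi_dens : π = (leb S).withDensity (fun x => ENNReal.ofReal (πd x))
  pi_cont : Continuous πd
  pi_ac : π ≪ leb S
  leb_ac : leb S ≪ π
  J_nonneg : ∀ x y, 0 ≤ Jd x y
  J_dens_prob : ∀ x, IsProbabilityMeasure ((leb S).withDensity (fun y => ENNReal.ofReal (Jd x y)))
  J_ac_pi : ∀ x, (leb S).withDensity (fun y => ENNReal.ofReal (Jd x y)) ≪ π
  J_cont : Continuous (fun p : S × S => Jd p.1 p.2)
  J_bdd : ∃ C : ℝ, ∀ x y, Jd x y ≤ C
  J_pos : ∀ x y, 0 < Jd x y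

/-- Assumption (A.3): existence of a Lyapunov function `U` for the kernel `K`. -/
structure Lyapunov (K : S → Measure S) (U : S → ℝ) : Prop where
  nonneg : ∀ x, 0 ≤ U x
  lb : ∃ M : ℝ, ∀ x, (M : EReal) ≤ (U x : EReal)
        - ENNReal.log (∫⁻ y, ENNReal.ofReal (Real.exp (U y)) ∂(K x))
  cpt : ∀ M : ℝ, IsCompact (closure {x : S | (U x : EReal)
        - ENNReal.log (∫⁻ y, ENNReal.ofReal (Real.exp (U y)) ∂(K x)) ≤ (M : EReal)})
  bdd_on_cpt : ∀ C : Set S, IsCompact C → ∃ B : ℝ, ∀ x ∈ C, U x ≤ B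

/-- The law of `(X_0, …, X_n)` for the Markov chain with transition kernel `K`
started at `x`. -/
def chainLaw [MeasurableSpace α] (K : α → Measure α) (x : α) : (n : ℕ) → Measure (Fin (n + 1) → α)
  | 0 => Measure.dirac (fun _ => x)
  | (n + 1) => (chainLaw K x n).bind (fun p => (K (p (Fin.last n))).map (fun y => Fin.snoc p y))

/-- The empirical measure of a finite path. -/
def empMeas [MeasurableSpace α] {n : ℕ} (p : Fin (n + 1) → α) : Measure α :=
  ((n : ℝ≥0∞) + 1)⁻¹ • ∑ i : Fin (n + 1), Measure.dirac (p i)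

lemma empMeas_isProbabilityMeasure [MeasurableSpace α] {n : ℕ} (p : Fin (n + 1) → α) :
    IsProbabilityMeasure (empMeas p) := by
  constructor
  simp only [empMeas, Measure.smul_apply, Measure.finset_sum_apply, measure_univ, smul_eq_mul]
  rw [Finset.sum_const, Finset.card_univ, Fintype.card_fin, nsmul_eq_mul, mul_one]
  rw [show ((n + 1 : ℕ) : ℝ≥0∞) = (n : ℝ≥0∞) + 1 by push_cast; ring]
  exact ENNReal.inv_mul_cancel (by simp) (by finiteness)

/-- The empirical measure of a finite path, as a probability measure. -/
def empProb [MeasurableSpace α] {n : ℕ} (p : Fin (n + 1) → α) : ProbabilityMeasure α :=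
  ⟨empMeas p, empMeas_isProbabilityMeasure p⟩

end MHLDP

namespace MHLDP

variable {α : Type*} {d : ℕ} {S : Set (EuclideanSpace ℝ (Fin d))}

/-- The `k`-step transition probabilities of the kernel `K`. -/
def kIter [MeasurableSpace α] (K : α → Measure α) : ℕ → α → Measure α
  | 0, x => Measure.dirac x
  | (n + 1), x => (kIter K n x).bind K

/-- Ergodicity of the stationary Markov chain with initial (invariant) distribution `μ` and
transition kernel `q`: every a.s. invariant set is trivial. -/
def KernelErgodic [MeasurableSpace α] (μ : Measure α) (q : α → Measure α) : Prop :=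
  Invariant μ q ∧ ∀ A : Set α, MeasurableSet A →
    (∀ᵐ x ∂μ, x ∈ A → q x A = 1) → μ A = 0 ∨ μ A = 1

/-- The set `S₊ = {x ∈ S : π(x) > 0}`. -/
def Splus (πd : S → ℝ) : Set S := {x | 0 < πd x}

/-- The modulus `Δ_ε(x)` of the ball-smoothing construction. -/
def Delta (πd : S → ℝ) (Jd : S → S → ℝ) (ε : ℝ) (x : S) : ℝ :=
  sSup {t : ℝ | ∀ y z : S, dist y x < t → dist z x < t →
    |Real.log (accDens πd Jd x x) - Real.log (accDens πd Jd y z)| < ε ∧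
    |Real.log (rej πd Jd x) - Real.log (rej πd Jd y)| < ε}

/-- The random radius `ϱ^n` of the ball-smoothing construction, given the sample points `Y`. -/
def rad (πd : S → ℝ) (Jd : S → S → ℝ) (n : ℕ) (Y : ℕ → S) : ℝ :=
  sInf ({1 / (n : ℝ)}
    ∪ (Set.range fun i : Fin n => Delta πd Jd (1 / (n : ℝ)) (Y (i : ℕ)))
    ∪ {t : ℝ | ∃ i j : Fin n, Y (i : ℕ) ≠ Y (j : ℕ) ∧ t = dist (Y (i : ℕ)) (Y (j : ℕ)) / 2}
    ∪ (Set.range fun i : Fin n =>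
        Metric.infDist ((Y (i : ℕ) : EuclideanSpace ℝ (Fin d))) (frontier S) / 2)
    ∪ (Set.range fun i : Fin n => accDens πd Jd (Y (i : ℕ)) (Y (i : ℕ))))

/-- The volume `V_n = λ(B_{ϱ^n}(0))`. -/
def Vn (πd : S → ℝ) (Jd : S → S → ℝ) (n : ℕ) (Y : ℕ → S) : ℝ≥0∞ :=
  volume (Metric.ball (0 : EuclideanSpace ℝ (Fin d)) (rad πd Jd n Y))

/-- The smoothed random measure `ν_s^n(dx) = (1/(n V_n)) Σ_{i<n} 1{x ∈ B_{ϱ^n}(Y_i)} λ(dx)`. -/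
def smooth (πd : S → ℝ) (Jd : S → S → ℝ) (n : ℕ) (Y : ℕ → S) : Measure S :=
  ((n : ℝ≥0∞) * Vn πd Jd n Y)⁻¹ •
    (leb S).withDensity (fun x =>
      ∑ i : Fin n, if dist x (Y (i : ℕ)) < rad πd Jd n Y then (1 : ℝ≥0∞) else 0)

end MHLDP

namespace MHLDP

/-!
Write `N` for a Lebesgue-null set carrying `ν_s`. Off the diagonal the Metropolis–Hastings
kernel is absolutely continuous with respect to Lebesgue measure, so `K(x, N \ {x}) = 0`. A kernel
`q` of finite cost satisfies `q(x,·) ≪ K(x,·)` for `ν_s`-a.e. `x`, hence `q(x, N \ {x}) = 0`;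
invariance of `ν_s` gives `q(x, Nᶜ) = 0`, so `q(x,·) = δ_x`. Finally `K(x,{x}) = r(x)` on `N`,
and the relative entropy of `δ_x` with respect to a measure with an atom of mass `r` at `x` is
`log (1/r)`, infinite for `r = 0`; so `I(ν_s) < ∞` forces `r > 0` `ν_s`-a.e.
-/

section General

variable {α : Type*} [MeasurableSpace α]

lemma measure_eq_zero_of_lintegral_ne_top {μ : Measure α} {f : α → ℝ≥0∞} {s : Set α}
    (hs : MeasurableSet s) (hf : ∀ᵐ x ∂μ, x ∈ s → f x = ∞) (hint : ∫⁻ x, f x ∂μ ≠ ∞) :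
    μ s = 0 := by
  by_contra h
  have hle : ∫⁻ x, s.indicator (fun _ => ∞) x ∂μ ≤ ∫⁻ x, f x ∂μ := by
    refine lintegral_mono_ae (hf.mono fun x hx => ?_)
    by_cases hxs : x ∈ s
    · simp [hxs, hx hxs]
    · simp [hxs]
  rw [lintegral_indicator_const hs, ENNReal.top_mul h] at hle
  exact hint (top_le_iff.mp hle)

lemma absolutelyContinuous_of_relEnt_ne_top {μ ν : Measure α} (h : relEnt μ ν ≠ ∞) : μ ≪ ν := by
  by_contra hac
  exact h (by rw [relEnt, if_neg fun h' => hac h'.1])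

lemma invariant_dirac (ν : Measure α) : Invariant ν (fun x => Measure.dirac x) := fun A hA => by
  simp_rw [Measure.dirac_apply' _ hA, lintegral_indicator_one hA]

lemma measurable_kernel_diff_singleton [MeasurableEq α] (q : Kernel α α)
    [IsSFiniteKernel q] {N : Set α} (hN : MeasurableSet N) :
    Measurable fun x => q x (N \ {x}) := by
  have hT : MeasurableSet {p : α × α | p.2 ∈ N ∧ p.1 ≠ p.2} :=
    (measurable_snd hN).inter (measurableSet_eq_fun measurable_fst measurable_snd).compl
  convert Kernel.measurable_kernel_prodMk_left (κ := q) hT using 3 with x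
  ext y
  simp [eq_comm]

lemma ae_measure_diff_singleton_eq_zero_of_lintegral_relEnt_ne_top [MeasurableEq α]
    {K : α → Measure α} {ν : Measure α} {N : Set α} (hN : MeasurableSet N)
    (hK : ∀ᵐ x ∂ν, K x (N \ {x}) = 0) (q : Kernel α α) [IsSFiniteKernel q]
    (hfin : ∫⁻ x, relEnt (q x) (K x) ∂ν ≠ ∞) : ∀ᵐ x ∂ν, q x (N \ {x}) = 0 := by
  refine ae_iff.2 (measure_eq_zero_of_lintegral_ne_top
    ((measurable_kernel_diff_singleton q hN) (measurableSet_singleton 0)).compl ?_ hfin)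
  filter_upwards [hK] with x hKx hqx
  by_contra hent
  exact hqx (absolutelyContinuous_of_relEnt_ne_top hent hKx)

lemma rateI_eq_lintegral_relEnt_dirac {K : α → Measure α} {ν : Measure α}
    (h : ∀ q : Kernel α α, IsMarkovKernel q → Invariant ν (fun x => q x) →
      ∫⁻ x, relEnt (q x) (K x) ∂ν ≠ ∞ → ∀ᵐ x ∂ν, q x = Measure.dirac x) :
    rateI K ν = ∫⁻ x, relEnt (Measure.dirac x) (K x) ∂ν := by
  refine le_antisymm ?_ (le_iInf₂ fun q hq => le_iInf fun hinv => ?_)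
  · exact iInf₂_le_of_le Kernel.id inferInstance (iInf_le_of_le (invariant_dirac ν) le_rfl)
  · by_cases hfin : ∫⁻ x, relEnt (q x) (K x) ∂ν = ∞
    · exact hfin ▸ le_top
    · exact (lintegral_congr_ae ((h q hq hinv hfin).mono fun x hx => by rw [hx])).ge

variable [MeasurableSingletonClass α]

lemma relEnt_dirac_of_measure_singleton_eq_zero {K : Measure α} {x : α} (h : K {x} = 0) :
    relEnt (Measure.dirac x) K = ∞ := by
  by_contra hfin
  simpa using absolutelyContinuous_of_relEnt_ne_top hfin h

lemma relEnt_dirac_of_measure_singleton_ne_zero (K : Measure α) [SigmaFinite K] {x : α}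
    (h0 : K {x} ≠ 0) :
    relEnt (Measure.dirac x) K = ENNReal.ofReal (Real.log (1 / (K {x}).toReal)) := by
  have hac : Measure.dirac x ≪ K := fun s hs => by
    have hx : x ∉ s := fun hx => h0 (measure_mono_null (singleton_subset_iff.2 hx) hs)
    simp [Measure.dirac_apply, hx]
  have hrn : (Measure.dirac x).rnDeriv K x = (K {x})⁻¹ := by
    have h := Measure.setLIntegral_rnDeriv hac {x}
    rw [lintegral_singleton, Measure.dirac_apply_of_mem (mem_singleton x)] at h
    exact ENNReal.eq_inv_of_mul_eq_one_left h
  rw [relEnt, if_pos ⟨hac, integrable_dirac enorm_lt_top⟩, integral_dirac, hrn,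
    ENNReal.toReal_inv, one_div]

lemma eq_dirac_of_measure_compl_singleton (μ : Measure α) [IsProbabilityMeasure μ] {x : α}
    (h : μ {x}ᶜ = 0) : μ = Measure.dirac x := by
  have hx : μ {x} = 1 := (prob_compl_eq_zero_iff (measurableSet_singleton x)).1 h
  calc μ = μ.restrict {x} := (Measure.restrict_eq_self_of_ae_mem (ae_iff.2 h)).symm
    _ = Measure.dirac x := by rw [Measure.restrict_singleton, hx, one_smul]

lemma ae_eq_dirac_of_invariant {ν : Measure α} (q : Kernel α α) [IsMarkovKernel q]
    (hinv : Invariant ν (fun x => q x)) {N : Set α} (hN : MeasurableSet N) (hνN : ν Nᶜ = 0)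
    (hmove : ∀ᵐ x ∂ν, q x (N \ {x}) = 0) : ∀ᵐ x ∂ν, q x = Measure.dirac x := by
  have hout : ∀ᵐ x ∂ν, q x Nᶜ = 0 :=
    (lintegral_eq_zero_iff (q.measurable_coe hN.compl)).1 ((hinv _ hN.compl).symm.trans hνN)
  filter_upwards [hout, hmove] with x hxout hxmove
  refine eq_dirac_of_measure_compl_singleton _ (measure_mono_null (fun y hy => ?_)
    (measure_union_null hxout hxmove))
  by_cases hyN : y ∈ N
  · exact Or.inr ⟨hyN, hy⟩
  · exact Or.inl hyN

end General

section MetropolisHastings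

variable {d : ℕ} {S : Set (EuclideanSpace ℝ (Fin d))} (πd : S → ℝ) (Jd : S → S → ℝ)

lemma sigmaFinite_leb (hS : MeasurableSet S) : SigmaFinite (leb S) :=
  SigmaFinite.of_map _ measurable_subtype_coe.aemeasurable
    (by rw [leb, map_comap_subtype_coe hS]; infer_instance)

instance [SigmaFinite (leb S)] (x : S) : SigmaFinite (mhK πd Jd x) := by
  have := (Measure.dirac x).smul_finite (ENNReal.ofReal_ne_top (r := rej πd Jd x))
  unfold mhK acc
  infer_instance

lemma mhK_apply_eq_zero {x : S} {A : Set S} (hA : MeasurableSet A) (hx : x ∉ A)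
    (hleb : leb S A = 0) : mhK πd Jd x A = 0 := by
  simp [mhK, acc, withDensity_absolutelyContinuous _ _ hleb, Measure.dirac_apply' x hA, hx]

lemma mhK_singleton {x : S} (hx : leb S {x} = 0) :
    mhK πd Jd x {x} = ENNReal.ofReal (rej πd Jd x) := by
  simp [mhK, acc, withDensity_absolutelyContinuous _ _ hx]

lemma measurable_rej [SFinite (leb S)] (hπ : Measurable πd)
    (hJ : Measurable fun p : S × S => Jd p.1 p.2) : Measurable (rej πd Jd) := by
  have hJ' : Measurable fun p : S × S => Jd p.2 p.1 := hJ.comp measurable_swap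
  have hacc : Measurable fun p : S × S => accDens πd Jd p.1 p.2 := by
    unfold accDens hastingsRatio
    refine Measurable.mul ?_ hJ
    refine Measurable.ite ?_ measurable_const (measurable_const.min ?_)
    · exact ((hπ.comp measurable_fst).mul hJ) (measurableSet_singleton 0)
    · exact ((hπ.comp measurable_snd).mul hJ').div ((hπ.comp measurable_fst).mul hJ)
  have hacc_univ : Measurable fun x => acc πd Jd x univ := by
    simp_rw [acc, withDensity_apply _ MeasurableSet.univ, Measure.restrict_univ]
    exact (ENNReal.measurable_ofReal.comp hacc).lintegral_prod_right'
  exact measurable_const.sub hacc_univ.ennreal_toReal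

variable {πd Jd} {ν : Measure S} {N : Set S}

lemma ae_eq_dirac_of_lintegral_relEnt_mhK_ne_top (hN : MeasurableSet N) (hlebN : leb S N = 0)
    (hνN : ν Nᶜ = 0) (q : Kernel S S) [IsMarkovKernel q] (hinv : Invariant ν (fun x => q x))
    (hfin : ∫⁻ x, relEnt (q x) (mhK πd Jd x) ∂ν ≠ ∞) : ∀ᵐ x ∂ν, q x = Measure.dirac x :=
  ae_eq_dirac_of_invariant q hinv hN hνN <|
    ae_measure_diff_singleton_eq_zero_of_lintegral_relEnt_ne_top hN
      (ae_of_all _ fun x => mhK_apply_eq_zero πd Jd (hN.diff (measurableSet_singleton x))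
        (fun hx => hx.2 rfl) (measure_mono_null sdiff_subset hlebN)) q hfin

lemma lintegral_relEnt_dirac_mhK [SigmaFinite (leb S)] (hrej : Measurable (rej πd Jd))
    (hlebN : leb S N = 0) (hνN : ν Nᶜ = 0)
    (hfin : ∫⁻ x, relEnt (Measure.dirac x) (mhK πd Jd x) ∂ν ≠ ∞) :
    ∫⁻ x, relEnt (Measure.dirac x) (mhK πd Jd x) ∂ν =
      ∫⁻ x, ENNReal.ofReal (Real.log (1 / rej πd Jd x)) ∂ν := by
  have hatomless : ∀ᵐ x ∂ν, leb S {x} = 0 := by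
    filter_upwards [show ∀ᵐ x ∂ν, x ∈ N from ae_iff.2 hνN] with x hx
    exact measure_mono_null (singleton_subset_iff.2 hx) hlebN
  have hpos : ∀ᵐ x ∂ν, 0 < rej πd Jd x := by
    have hnull : ν {x | rej πd Jd x ≤ 0} = 0 := by
      refine measure_eq_zero_of_lintegral_ne_top (hrej measurableSet_Iic) ?_ hfin
      filter_upwards [hatomless] with x hx hrej0
      refine relEnt_dirac_of_measure_singleton_eq_zero ?_
      rw [mhK_singleton πd Jd hx, ENNReal.ofReal_eq_zero.2 hrej0]
    simpa only [ae_iff, not_lt] using hnull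
  refine lintegral_congr_ae ?_
  filter_upwards [hatomless, hpos] with x hx hrej0
  rw [relEnt_dirac_of_measure_singleton_ne_zero _ (by rw [mhK_singleton πd Jd hx]; simpa),
    mhK_singleton πd Jd hx, ENNReal.toReal_ofReal hrej0.le]

end MetropolisHastings

theorem mh_singular_rate_function_general
    {d : ℕ} {S : Set (EuclideanSpace ℝ (Fin d))}
    (πd : S → ℝ) (Jd : S → S → ℝ) (π : Measure S) (hA : Assumptions πd Jd π)
    (νsing : Measure S)
    (hsing : Measure.MutuallySingular νsing (leb S))
    (hfin : rateI (mhK πd Jd) νsing ≠ ⊤) :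
    Invariant νsing (fun x => Measure.dirac x) ∧
    rateI (mhK πd Jd) νsing = ∫⁻ x, relEnt (Measure.dirac x) (mhK πd Jd x) ∂νsing ∧
    rateI (mhK πd Jd) νsing =
      ∫⁻ x, ENNReal.ofReal (Real.log (1 / rej πd Jd x)) ∂νsing ∧
    (∀ q : Kernel S S, IsMarkovKernel q → Invariant νsing (fun x => q x) →
      (∫⁻ x, relEnt (q x) (mhK πd Jd x) ∂νsing = rateI (mhK πd Jd) νsing) →
      ∀ᵐ x ∂νsing, q x = Measure.dirac x) := by
  have := sigmaFinite_leb hA.measS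
  obtain ⟨N, hN, hlebN, hνN⟩ := hsing.symm
  have hdirac : ∀ q : Kernel S S, IsMarkovKernel q → Invariant νsing (fun x => q x) →
      ∫⁻ x, relEnt (q x) (mhK πd Jd x) ∂νsing ≠ ⊤ → ∀ᵐ x ∂νsing, q x = Measure.dirac x :=
    fun q _ hinv hq => ae_eq_dirac_of_lintegral_relEnt_mhK_ne_top hN hlebN hνN q hinv hq
  have hrate := rateI_eq_lintegral_relEnt_dirac hdirac
  refine ⟨invariant_dirac νsing, hrate, ?_, fun q hq hinv hopt => hdirac q hq hinv (hopt ▸ hfin)⟩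
  rw [hrate] at hfin ⊢
  exact lintegral_relEnt_dirac_mhK (measurable_rej πd Jd hA.pi_cont.measurable
    hA.J_cont.measurable) hlebN hνN hfin

/-- **Lemma 6.1.** Let `ν_s ⊥ λ` with `I(ν_s) < ∞`. Then `q(x,·) = δ_x(·)` (`ν_s`-a.s.)
is the only transition kernel with invariant measure `ν_s` attaining the infimum defining
`I(ν_s)`; consequently `I(ν_s) = ∫ R(δ_x ‖ K(x,·)) ν_s(dx) = ∫ log(1/r(x)) ν_s(dx)`. -/
theorem mh_singular_rate_function
    {d : ℕ} {S : Set (EuclideanSpace ℝ (Fin d))}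
    (πd : S → ℝ) (Jd : S → S → ℝ) (π : Measure S) (hA : Assumptions πd Jd π)
    (νsing : Measure S) (hν : IsProbabilityMeasure νsing)
    (hsing : Measure.MutuallySingular νsing (leb S))
    (hfin : rateI (mhK πd Jd) νsing ≠ ⊤) :
    Invariant νsing (fun x => Measure.dirac x) ∧
    rateI (mhK πd Jd) νsing = ∫⁻ x, relEnt (Measure.dirac x) (mhK πd Jd x) ∂νsing ∧
    rateI (mhK πd Jd) νsing =
      ∫⁻ x, ENNReal.ofReal (Real.log (1 / rej πd Jd x)) ∂νsing ∧
    (∀ q : Kernel S S, IsMarkovKernel q → Invariant νsing (fun x => q x) →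
      (∫⁻ x, relEnt (q x) (mhK πd Jd x) ∂νsing = rateI (mhK πd Jd) νsing) →
      ∀ᵐ x ∂νsing, q x = Measure.dirac x) :=
  mh_singular_rate_function_general πd Jd π hA νsing hsing hfin

end MHLDP
end
end

section
/- Let x₀ ∈ S be such that r(x₀) > 0, and let ν = δ_{x₀}. Then ν is invariant for the kernel q̃(x,·) = δ_x(·), and the rate function satisfies I(ν) ≤ R(δ_{x₀}(·) ‖ K(x₀,·)) ≤ log(1/r(x₀)) < ∞. In particular, finiteness of I(ν) does not imply that ν is absolutely continuous with respect to π. -/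
open MeasureTheory ProbabilityTheory Filter Set Metric
open scoped ENNReal NNReal Topology

noncomputable section

/-! The identity kernel leaves `δ_{x₀}` invariant, so `I(δ_{x₀}) ≤ R(δ_{x₀} ‖ K(x₀,·))`. The
density of `δ_{x₀}` with respect to `K(x₀,·)` is `1 / K(x₀,{x₀})` at `x₀`, and the rejection
term gives `K(x₀,{x₀}) ≥ r(x₀)`. Finally `δ_{x₀} ≪ π` fails because for `d > 0` points are
Lebesgue-null, while for `d = 0` the state space is a single point and `r(x₀) = 0`. -/

namespace MHLDP

section RelativeEntropy

variable {α : Type*} [MeasurableSpace α]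

lemma dirac_absolutelyContinuous {μ : Measure α} {x : α} (hx : μ {x} ≠ 0) :
    Measure.dirac x ≪ μ := by
  refine Measure.AbsolutelyContinuous.mk fun s hs hμs => ?_
  have hxs : x ∉ s := fun hxs => hx (measure_mono_null (singleton_subset_iff.2 hxs) hμs)
  simp [Measure.dirac_apply' _ hs, hxs]

variable [MeasurableSingletonClass α]

lemma rnDeriv_dirac_apply_self {μ : Measure α} [SigmaFinite μ] {x : α} (hx : μ {x} ≠ 0) :
    (Measure.dirac x).rnDeriv μ x = (μ {x})⁻¹ := by
  have hmass : (Measure.dirac x).rnDeriv μ x * μ {x} = 1 := by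
    conv_rhs => rw [← Measure.dirac_apply_of_mem (mem_singleton x),
      ← Measure.withDensity_rnDeriv_eq _ μ (dirac_absolutelyContinuous hx)]
    rw [withDensity_apply _ (measurableSet_singleton x),
      lintegral_singleton' (Measure.measurable_rnDeriv _ _) x]
  exact ENNReal.eq_inv_of_mul_eq_one_left hmass

lemma relEnt_dirac {μ : Measure α} [IsFiniteMeasure μ] {x : α} (hx : μ {x} ≠ 0) :
    relEnt (Measure.dirac x) μ = ENNReal.ofReal (Real.log (1 / (μ {x}).toReal)) := by
  have hint : Integrable (fun y => Real.log (((Measure.dirac x).rnDeriv μ y).toReal))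
      (Measure.dirac x) := integrable_dirac (by simp)
  rw [relEnt, if_pos ⟨dirac_absolutelyContinuous hx, hint⟩, integral_dirac,
    rnDeriv_dirac_apply_self hx, ENNReal.toReal_inv, one_div]

lemma relEnt_dirac_le_log_inv {μ : Measure α} [IsFiniteMeasure μ] {x : α} {c : ℝ} (hc : 0 < c)
    (hcx : ENNReal.ofReal c ≤ μ {x}) :
    relEnt (Measure.dirac x) μ ≤ ENNReal.ofReal (Real.log (1 / c)) := by
  have hx : μ {x} ≠ 0 := ((ENNReal.ofReal_pos.2 hc).trans_le hcx).ne'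
  have hcx' : c ≤ (μ {x}).toReal := (ENNReal.ofReal_le_iff_le_toReal (measure_ne_top μ _)).1 hcx
  rw [relEnt_dirac hx]
  gcongr
  exact one_div_pos.2 (hc.trans_le hcx')

lemma invariant_dirac_dirac (x : α) : Invariant (Measure.dirac x) Measure.dirac :=
  fun A _ => (lintegral_dirac x fun y => Measure.dirac y A).symm

lemma rateI_dirac_le (K : α → Measure α) (x : α) :
    rateI K (Measure.dirac x) ≤ relEnt (Measure.dirac x) (K x) := by
  refine iInf₂_le_of_le Kernel.id inferInstance (iInf_le_of_le (invariant_dirac_dirac x) ?_)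
  simp [Kernel.id_apply]

end RelativeEntropy

section MetropolisHastings

variable {d : ℕ} {S : Set (EuclideanSpace ℝ (Fin d))} {πd : S → ℝ} {Jd : S → S → ℝ}

lemma hastingsRatio_self (x : S) : hastingsRatio πd Jd x x = 1 := by
  unfold hastingsRatio
  split_ifs with h
  · rfl
  · rw [div_self h, min_self]

lemma hastingsRatio_le_one (x y : S) : hastingsRatio πd Jd x y ≤ 1 := by
  unfold hastingsRatio
  split_ifs
  exacts [le_rfl, min_le_left _ _]

lemma acc_le_proposal {x : S} (hJ : ∀ y, 0 ≤ Jd x y) :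
    acc πd Jd x ≤ (leb S).withDensity (fun y => ENNReal.ofReal (Jd x y)) :=
  withDensity_mono <| ae_of_all _ fun y => ENNReal.ofReal_le_ofReal <|
    mul_le_of_le_one_left (hJ y) (hastingsRatio_le_one x y)

lemma isFiniteMeasure_mhK {x : S} (hJ : ∀ y, 0 ≤ Jd x y)
    [IsProbabilityMeasure ((leb S).withDensity (fun y => ENNReal.ofReal (Jd x y)))] :
    IsFiniteMeasure (mhK πd Jd x) := by
  have : IsFiniteMeasure (acc πd Jd x) := isFiniteMeasure_of_le _ (acc_le_proposal hJ)
  have : IsFiniteMeasure (ENNReal.ofReal (rej πd Jd x) • Measure.dirac x) := by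
    constructor; simp
  unfold mhK
  infer_instance

lemma ofReal_rej_le_mhK_singleton (x : S) : ENNReal.ofReal (rej πd Jd x) ≤ mhK πd Jd x {x} := by
  simp [mhK]

lemma rej_eq_zero_of_subsingleton [Subsingleton S] {x : S}
    [IsProbabilityMeasure ((leb S).withDensity (fun y => ENNReal.ofReal (Jd x y)))] :
    rej πd Jd x = 0 := by
  have hacc : acc πd Jd x = (leb S).withDensity (fun y => ENNReal.ofReal (Jd x y)) := by
    unfold acc accDens
    congr! with y
    rw [Subsingleton.elim y x, hastingsRatio_self, one_mul]
  simp [rej, hacc]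

lemma leb_singleton [NeZero d] (x : S) : leb S {x} = 0 := by
  refine nonpos_iff_eq_zero.1 ((Measure.comap_apply_le _ _
    (measurableSet_singleton x).nullMeasurableSet).trans ?_)
  simp

end MetropolisHastings

/-- **Finiteness of the rate function at a Dirac mass.** If `r(x₀) > 0` and `ν = δ_{x₀}`,
then `ν` is invariant for `q̃(x,·) = δ_x(·)`, and
`I(ν) ≤ R(δ_{x₀} ‖ K(x₀,·)) ≤ log(1/r(x₀)) < ∞`; in particular finiteness of `I(ν)`
does not imply `ν ≪ π`. -/
theorem mh_dirac_finite_rate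
    {d : ℕ} {S : Set (EuclideanSpace ℝ (Fin d))}
    (πd : S → ℝ) (Jd : S → S → ℝ) (π : Measure S) (hA : Assumptions πd Jd π)
    (x₀ : S) (hr : 0 < rej πd Jd x₀) :
    Invariant (Measure.dirac x₀) (fun x : S => Measure.dirac x) ∧
    rateI (mhK πd Jd) (Measure.dirac x₀) ≤ relEnt (Measure.dirac x₀) (mhK πd Jd x₀) ∧
    relEnt (Measure.dirac x₀) (mhK πd Jd x₀) ≤
      ENNReal.ofReal (Real.log (1 / rej πd Jd x₀)) ∧
    rateI (mhK πd Jd) (Measure.dirac x₀) < ⊤ ∧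
    ¬ (Measure.dirac x₀ ≪ π) := by
  have := hA.J_dens_prob x₀
  have := isFiniteMeasure_mhK (πd := πd) (hA.J_nonneg x₀)
  have hrate := rateI_dirac_le (mhK πd Jd) x₀
  have hent := relEnt_dirac_le_log_inv hr (ofReal_rej_le_mhK_singleton x₀)
  refine ⟨invariant_dirac_dirac x₀, hrate, hent, (hrate.trans hent).trans_lt ENNReal.ofReal_lt_top,
    fun hac => ?_⟩
  rcases eq_or_ne d 0 with rfl | hd
  · exact hr.ne' rej_eq_zero_of_subsingleton
  · have : NeZero d := ⟨hd⟩
    simpa using hac (hA.pi_ac (leb_singleton x₀))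

end MHLDP
end
end
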